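/- Let A be a unital C*-algebra and a ∈ A. Then v(a)³ ≤ (1/3)·‖a*a + aa*‖·‖a‖ + (1/3)·‖a²‖·‖a‖. -/

import Mathlib

open scoped ComplexOrder

/-- A state on a unital `C*`-algebra: a positive linear functional `φ` (equivalently, since the
algebra is complete, `φ (star b * b) ≥ 0` for all `b`) with `φ 1 = 1`. -/
def IsState {A : Type*} [CStarAlgebra A] (φ : A →ₗ[ℂ] ℂ) : Prop :=
  (∀ b : A, 0 ≤ φ (star b * b)) ∧ φ 1 = 1

/-- The numerical radius of an element of a unital `C*`-algebra:
`v(a) = sup { |φ(a)| : φ a state on A }`. -/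
noncomputable def numRadius {A : Type*} [CStarAlgebra A] (a : A) : ℝ :=
  sSup {r : ℝ | ∃ φ : A →ₗ[ℂ] ℂ, IsState φ ∧ r = ‖φ a‖}

/-!
Cauchy–Schwarz for a state `φ` gives `|φ x|² ≤ φ (x⋆x)`, hence `|φ a| ≤ ‖a‖` and
`2 |φ a|² ≤ φ (a⋆a + aa⋆) ≤ ‖a⋆a + aa⋆‖`. After rotating `a` by a unimodular scalar so that
`φ a = |φ a|`, the self-adjoint `k = a + a⋆` has `φ k = 2 |φ a|` and
`k² = a² + (a²)⋆ + a⋆a + aa⋆`, so Cauchy–Schwarz for `k` gives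
`4 |φ a|² ≤ 2 ‖a²‖ + ‖a⋆a + aa⋆‖`. Adding the two bounds, `v(a)² ≤ (‖a⋆a + aa⋆‖ + ‖a²‖) / 3`,
and `v(a) ≤ ‖a‖` supplies the remaining factor.
-/

open ComplexConjugate

lemma numRadius_nonneg {A : Type*} [CStarAlgebra A] (a : A) : 0 ≤ numRadius a :=
  Real.sSup_nonneg <| by rintro _ ⟨φ, -, rfl⟩; exact norm_nonneg _

lemma numRadius_le {A : Type*} [CStarAlgebra A] {a : A} {c : ℝ} (hc : 0 ≤ c)
    (h : ∀ φ : A →ₗ[ℂ] ℂ, IsState φ → ‖φ a‖ ≤ c) : numRadius a ≤ c :=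
  Real.sSup_le (by rintro _ ⟨φ, hφ, rfl⟩; exact h φ hφ) hc

namespace IsState

variable {A : Type*} [CStarAlgebra A] [PartialOrder A] [StarOrderedRing A] {φ : A →ₗ[ℂ] ℂ}

noncomputable def toPositiveLinearMap (hφ : IsState φ) : A →ₚ[ℂ] ℂ :=
  .mk₀ φ fun _ hx ↦ by
    obtain ⟨b, rfl⟩ := CStarAlgebra.nonneg_iff_eq_star_mul_self.mp hx
    exact hφ.1 b

@[simp]
lemma toPositiveLinearMap_apply (hφ : IsState φ) (x : A) : hφ.toPositiveLinearMap x = φ x := rfl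

lemma map_star (hφ : IsState φ) (x : A) : φ (star x) = conj (φ x) :=
  StarHomClass.map_star hφ.toPositiveLinearMap x

lemma re_apply_le_norm (hφ : IsState φ) {c : A} (hc : 0 ≤ c) : (φ c).re ≤ ‖c‖ := by
  have h := hφ.toPositiveLinearMap.norm_apply_le_of_nonneg c hc
  simp only [toPositiveLinearMap_apply, hφ.2, norm_one, one_mul] at h
  exact (Complex.re_le_norm _).trans h

/-- Cauchy–Schwarz for the GNS semi-inner product `⟪x, y⟫ = φ (star x * y)`, at `x = 1`. -/
lemma norm_apply_sq_le_re_apply_star_mul_self (hφ : IsState φ) (x : A) :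
    ‖φ x‖ ^ 2 ≤ (φ (star x * x)).re := by
  set f := hφ.toPositiveLinearMap
  have h := norm_inner_le_norm (𝕜 := ℂ) (f.toPreGNS 1) (f.toPreGNS x)
  have h_one : ‖f.toPreGNS 1‖ = 1 := by
    simp [f.preGNS_norm_def, f, hφ.2]
  rw [f.preGNS_inner_def, h_one, one_mul, f.preGNS_norm_def] at h
  simp only [f.ofPreGNS_toPreGNS, star_one, one_mul, toPositiveLinearMap_apply, f] at h
  exact (Real.le_sqrt (norm_nonneg _) (Complex.le_def.mp (hφ.1 x)).1).mp h

lemma norm_apply_le (hφ : IsState φ) (x : A) : ‖φ x‖ ≤ ‖x‖ := by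
  have h := (hφ.norm_apply_sq_le_re_apply_star_mul_self x).trans
    (hφ.re_apply_le_norm (star_mul_self_nonneg x))
  rw [CStarRing.norm_star_mul_self, ← sq] at h
  exact (sq_le_sq₀ (norm_nonneg _) (norm_nonneg _)).mp h

lemma two_mul_norm_apply_sq_le (hφ : IsState φ) (a : A) :
    2 * ‖φ a‖ ^ 2 ≤ ‖star a * a + a * star a‖ := by
  have h_a := hφ.norm_apply_sq_le_re_apply_star_mul_self a
  have h_star := hφ.norm_apply_sq_le_re_apply_star_mul_self (star a)
  rw [star_star, hφ.map_star, Complex.norm_conj] at h_star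
  have h_sum := hφ.re_apply_le_norm (add_nonneg (star_mul_self_nonneg a) (mul_star_self_nonneg a))
  rw [map_add, Complex.add_re] at h_sum
  linarith

lemma four_mul_sq_le_of_apply_eq_ofReal (hφ : IsState φ) {b : A} {r : ℝ} (hb : φ b = r) :
    4 * r ^ 2 ≤ ‖star b * b + b * star b‖ + 2 * ‖b ^ 2‖ := by
  set k := b + star b
  have hk : φ k = (2 * r : ℝ) := by
    simp only [k, map_add, hφ.map_star, hb, Complex.conj_ofReal]
    push_cast
    ring
  have hkk : star k * k = (b ^ 2 + star (b ^ 2)) + (star b * b + b * star b) := by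
    simp only [k, star_add, star_star, star_pow]
    noncomm_ring
  have h_cs := hφ.norm_apply_sq_le_re_apply_star_mul_self k
  rw [hk, hkk, map_add, map_add, hφ.map_star, Complex.add_re, Complex.add_re, Complex.conj_re,
    Complex.norm_real, Real.norm_eq_abs, sq_abs] at h_cs
  have h_sq := (Complex.re_le_norm _).trans (hφ.norm_apply_le (b ^ 2))
  have h_sum := hφ.re_apply_le_norm (add_nonneg (star_mul_self_nonneg b) (mul_star_self_nonneg b))
  linarith

lemma four_mul_norm_apply_sq_le (hφ : IsState φ) (a : A) :
    4 * ‖φ a‖ ^ 2 ≤ ‖star a * a + a * star a‖ + 2 * ‖a ^ 2‖ := by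
  obtain ⟨u, hu, hua⟩ := Complex.exists_norm_eq_mul_self (φ a)
  have huu : star u * u = 1 := by
    rw [Complex.star_def, Complex.conj_mul', hu]
    simp
  have h := hφ.four_mul_sq_le_of_apply_eq_ofReal (b := u • a) (by rw [map_smul, smul_eq_mul, hua])
  rwa [star_smul, smul_mul_smul_comm, smul_mul_smul_comm, huu, mul_comm u, huu, one_smul,
    one_smul, smul_pow, norm_smul, norm_pow, hu, one_pow, one_mul] at h

lemma three_mul_norm_apply_sq_le (hφ : IsState φ) (a : A) :
    3 * ‖φ a‖ ^ 2 ≤ ‖star a * a + a * star a‖ + ‖a ^ 2‖ := by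
  linarith [hφ.two_mul_norm_apply_sq_le a, hφ.four_mul_norm_apply_sq_le a]

end IsState

/-- Corollary 2.14:
`v(a)³ ≤ (1/3)·‖a*a + aa*‖·‖a‖ + (1/3)·‖a²‖·‖a‖`. -/
theorem numRadius_cube_le_third
    {A : Type*} [CStarAlgebra A] (a : A) :
    numRadius a ^ 3 ≤
      (1 / 3) * ‖star a * a + a * star a‖ * ‖a‖ + (1 / 3) * ‖a ^ 2‖ * ‖a‖ := by
  let _ := CStarAlgebra.spectralOrder A
  have := CStarAlgebra.spectralOrderedRing A
  set M := (‖star a * a + a * star a‖ + ‖a ^ 2‖) / 3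
  have hM : 0 ≤ M := by positivity
  have hv_norm : numRadius a ≤ ‖a‖ := numRadius_le (norm_nonneg a) fun φ hφ ↦ hφ.norm_apply_le a
  have hv_sq : numRadius a ^ 2 ≤ M := by
    refine (Real.le_sqrt (numRadius_nonneg a) hM).mp <| numRadius_le (Real.sqrt_nonneg M) ?_
    intro φ hφ
    rw [Real.le_sqrt (norm_nonneg _) hM, le_div_iff₀ three_pos, mul_comm]
    exact hφ.three_mul_norm_apply_sq_le a
  calc numRadius a ^ 3 = numRadius a ^ 2 * numRadius a := by ring
    _ ≤ M * ‖a‖ := mul_le_mul hv_sq hv_norm (numRadius_nonneg a) hM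
    _ = (1 / 3) * ‖star a * a + a * star a‖ * ‖a‖ + (1 / 3) * ‖a ^ 2‖ * ‖a‖ := by ring
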